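/- arXiv:0912.0684 — 2 statements merged into one kernel-verified Lean document; each statement's English description precedes it below -/
import Mathlib

section
/- Let $(a_n)_{n \ge 0}$ be a complex sequence with $a_0 = 1$ satisfying $a_{n+1} = (\alpha + \frac{\beta}{n+\gamma}) a_n$. Let $d_n^{(k)}$ denote the determinant of the $n \times n$ Hankel matrix with $(i,j)$-entry $a_{i+j+k-2}$ ($1 \le i,j \le n$). Then $d_n^{(k)} = \prod_{1 \le i \le j \le n-1} \frac{i[\alpha(i+\gamma-1)+\beta][\alpha(i-1)-\beta]}{[i+\gamma-1][i+j+\gamma-2][i+j+\gamma-1]} \times \prod_{j=0}^{k-1}\prod_{i=1}^{n} \frac{\alpha(i+j+\gamma-1)+\beta}{i+j+\gamma+n-2}$, provided all denominators are nonzero. -/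
/-!
Write `a m = N m / D m` with `N m = ∏_{t<m} (α (t + γ) + β)` and `D m = ∏_{t<m} (t + γ)`. Pulling
`N (i + k) / D (i + k + n - 1)` out of row `i` of the Hankel matrix leaves the entries
`∏_{s<j} (α (x_i + s) + β) · ∏_{s<n-1-j} (x_i + j + s)` with `x_i = i + k + γ`. Subtracting `α` times
the previous column, one sweep after another, turns the first factor of column `j` into the
constant `∏_{t<j} (β - α t)`; what remains is a matrix of monic polynomials of degree `n - 1 - j`
evaluated at the `x_i`, i.e. a Vandermonde determinant in disguise. Since the `x_i` form an
arithmetic progression, everything is an explicit product, which telescopes into the stated form.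
-/

open Finset Matrix Polynomial

theorem prod_Icc_one_eq_prod_range {M : Type*} [CommMonoid M] (f : ℕ → M) (n : ℕ) :
    ∏ i ∈ Icc 1 n, f i = ∏ i ∈ range n, f (i + 1) := by
  rw [range_eq_Ico, prod_Ico_add', ← Ico_add_one_right_eq_Icc, zero_add]

theorem prod_Icc_one_sub_one_eq_prod_range {M : Type*} [CommMonoid M] {f : ℕ → M} (h0 : f 0 = 1)
    (n : ℕ) : ∏ j ∈ Icc 1 (n - 1), f j = ∏ j ∈ range n, f j := by
  cases n with
  | zero => simp
  | succ n => rw [prod_range_succ', h0, mul_one, Nat.add_sub_cancel, prod_Icc_one_eq_prod_range]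

theorem prod_univ_prod_Ioi_eq_prod_range_prod_range {M : Type*} [CommMonoid M] (n : ℕ)
    (f : ℕ → ℕ → M) : ∏ i : Fin n, ∏ j ∈ Ioi i, f i j = ∏ j ∈ range n, ∏ i ∈ range j, f i j := by
  have hIoi (i : Fin n) : ∏ j ∈ Ioi i, f i j = ∏ j ∈ Ioo (i : ℕ) n, f i j := by
    rw [← Fin.map_valEmbedding_Ioi, prod_map]; rfl
  simp_rw [hIoi]
  rw [Fin.prod_univ_eq_prod_range (fun i => ∏ j ∈ Ioo i n, f i j)]
  exact prod_comm' fun i j => by simp only [mem_range, mem_Ioo]; omega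

theorem Matrix.det_eq_of_col_sub_mul_prev {R : Type*} [CommRing R] {n : ℕ}
    (M N : Matrix (Fin n) (Fin n) R) (c : R) (r : ℕ)
    (hle : ∀ i (j : Fin n), (j : ℕ) ≤ r → N i j = M i j)
    (hgt : ∀ i (j : Fin n) (hj : r < j), N i j = M i j - c * M i ⟨j - 1, by omega⟩) :
    N.det = M.det := by
  let E : Matrix (Fin n) (Fin n) R :=
    of fun l j => if l = j then 1 else if (l : ℕ) + 1 = j ∧ r < j then -c else 0
  have hE : E.det = 1 := by
    rw [det_of_isUpperTriangular fun i j (hji : j < i) => by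
      simp only [E, of_apply, if_neg hji.ne']
      rw [if_neg (by rw [Fin.lt_def] at hji; omega)]]
    exact prod_eq_one fun i _ => by simp [E]
  suffices N = M * E by rw [this, det_mul, hE, mul_one]
  ext i j
  rw [mul_apply]
  by_cases hj : r < j
  · have hne : (⟨j - 1, by omega⟩ : Fin n) ≠ j := Fin.ne_of_val_ne (show (j : ℕ) - 1 ≠ j by omega)
    rw [Fintype.sum_eq_add j ⟨j - 1, by omega⟩ hne.symm, hgt i j hj]
    · simp only [E, of_apply, if_pos, mul_one, hne, if_false, show (j : ℕ) - 1 + 1 = j by omega, hj,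
        and_self, mul_neg]
      ring
    · rintro l ⟨hlj, hl⟩
      simp only [E, of_apply, if_neg hlj]
      rw [if_neg, mul_zero]
      rintro ⟨h, -⟩
      exact hl (Fin.ext (show (l : ℕ) = j - 1 by omega))
  · rw [Fintype.sum_eq_single j, hle i j (by omega)]
    · simp [E]
    · intro l hl
      simp [E, hl, hj]

section ColumnReduction

variable {R : Type*} [CommRing R]

theorem det_prod_shift_eq_det_vandermonde [Nontrivial R] {n : ℕ} (x : Fin n → R) :
    (of fun i j : Fin n => ∏ s ∈ range (n - 1 - j), (x i + ((j + s : ℕ) : R))).det =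
      (vandermonde (x ∘ Fin.rev)).det := by
  set p : Fin n → R[X] := fun j => ∏ s ∈ range j, (X + C ((n - 1 - j + s : ℕ) : R))
  have hmonic (j : Fin n) : (p j).Monic := monic_prod_of_monic _ _ fun s _ => monic_X_add_C _
  have hdeg (j : Fin n) : (p j).natDegree = j := by
    rw [natDegree_prod_of_monic _ _ fun s _ => monic_X_add_C _]
    simp only [natDegree_X_add_C, sum_const, card_range, smul_eq_mul, mul_one]
  rw [det_eval_matrixOfPolynomials_eq_det_vandermonde _ p hdeg hmonic,
    ← det_submatrix_equiv_self Fin.revPerm]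
  congr 1
  ext i j
  simp only [submatrix_apply, of_apply, Fin.revPerm_apply, p, eval_prod, eval_add,
    eval_X, eval_C, Function.comp_apply, Fin.val_rev]
  have hj := j.isLt
  rw [show n - 1 - (n - (j + 1)) = j by omega, show n - (j + 1) = n - 1 - j by omega]

theorem det_vandermonde_rev_add (n : ℕ) (c : R) :
    (vandermonde ((fun i : Fin n => (i : R) + c) ∘ Fin.rev)).det =
      ∏ j ∈ range n, ∏ i ∈ range j, ((i : R) - j) := by
  have hrev (i j : Fin n) : ((j.rev : ℕ) : R) - (i.rev : ℕ) = (i : R) - j := by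
    have := i.isLt; have := j.isLt
    rw [Fin.val_rev, Fin.val_rev, Nat.cast_sub (by omega), Nat.cast_sub (by omega)]
    push_cast; ring
  rw [Function.comp_def, det_vandermonde_add, det_vandermonde]
  simp_rw [hrev]
  exact prod_univ_prod_Ioi_eq_prod_range_prod_range n fun i j => (i : R) - j

/-- Column `j` after `r` sweeps of subtracting `α` times the previous column, at the point `y`. -/
def colStage (α β : R) (n r : ℕ) (y : R) (j : ℕ) : R :=
  (∏ t ∈ range (min j r), (β - α * t)) * (∏ s ∈ range (j - r), (α * (y + s) + β)) *
    ∏ s ∈ range (n - 1 - j), (y + ((j + s : ℕ) : R))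

theorem colStage_succ_of_le (α β : R) (n : ℕ) {r j : ℕ} (y : R) (h : j ≤ r) :
    colStage α β n (r + 1) y j = colStage α β n r y j := by
  rw [colStage, colStage, min_eq_left h, min_eq_left (by omega), Nat.sub_eq_zero_of_le h,
    Nat.sub_eq_zero_of_le (by omega)]

theorem colStage_succ_of_lt (α β : R) (n : ℕ) {r j : ℕ} (y : R) (hr : r < j) (hj : j < n) :
    colStage α β n (r + 1) y j = colStage α β n r y j - α * colStage α β n r y (j - 1) := by
  obtain ⟨m, rfl⟩ : ∃ m, j = r + 1 + m := ⟨j - (r + 1), by omega⟩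
  set L := n - 1 - (r + 1 + m)
  have hshift : ∏ s ∈ range L, (y + ((r + m + (s + 1) : ℕ) : R)) =
      ∏ s ∈ range L, (y + ((r + 1 + m + s : ℕ) : R)) :=
    prod_congr rfl fun s _ => by congr 2; omega
  rw [colStage, colStage, colStage, min_eq_right (by omega), min_eq_right (by omega),
    show r + 1 + m - 1 = r + m by omega, min_eq_right (by omega), show r + 1 + m - (r + 1) = m by omega,
    show r + 1 + m - r = m + 1 by omega, Nat.add_sub_cancel_left,
    show n - 1 - (r + m) = L + 1 by omega, prod_range_succ _ r, prod_range_succ _ m,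
    prod_range_succ' _ L, hshift]
  push_cast
  ring

theorem det_colStage (α β : R) {n : ℕ} (x : Fin n → R) (r : ℕ) :
    (of fun i j : Fin n => colStage α β n r (x i) j).det =
      (of fun i j : Fin n => colStage α β n 0 (x i) j).det := by
  induction r with
  | zero => rfl
  | succ r ih =>
    rw [← ih]
    exact det_eq_of_col_sub_mul_prev _ _ α r (fun i j h => colStage_succ_of_le α β n (x i) h)
      fun i j h => colStage_succ_of_lt α β n (x i) h j.isLt

theorem det_prod_affine_mul_prod_shift [Nontrivial R] (α β : R) {n : ℕ} (x : Fin n → R) :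
    (of fun i j : Fin n => (∏ s ∈ range j, (α * (x i + s) + β)) *
        ∏ s ∈ range (n - 1 - j), (x i + ((j + s : ℕ) : R))).det =
      (∏ j ∈ range n, ∏ t ∈ range j, (β - α * t)) * (vandermonde (x ∘ Fin.rev)).det := by
  have hfirst : (of fun i j : Fin n => (∏ s ∈ range j, (α * (x i + s) + β)) *
      ∏ s ∈ range (n - 1 - j), (x i + ((j + s : ℕ) : R))) =
        of fun i j : Fin n => colStage α β n 0 (x i) j := by
    ext i j
    simp [colStage]
  have hlast : (of fun i j : Fin n => colStage α β n (n - 1) (x i) j) =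
      of fun i j : Fin n => (∏ t ∈ range j, (β - α * t)) *
        ∏ s ∈ range (n - 1 - j), (x i + ((j + s : ℕ) : R)) := by
    ext i j
    have hj := j.isLt
    rw [of_apply, colStage, min_eq_left (by omega), Nat.sub_eq_zero_of_le (by omega), prod_range_zero,
      mul_one, of_apply]
  rw [hfirst, ← det_colStage α β x (n - 1), hlast, ← det_prod_shift_eq_det_vandermonde,
    ← Fin.prod_univ_eq_prod_range (fun j => ∏ t ∈ range j, (β - α * t))]
  exact det_mul_row _ _

end ColumnReduction

section Hankel

variable {K : Type*} [Field K]

def seqNum (α β γ : K) (m : ℕ) : K := ∏ t ∈ range m, (α * (t + γ) + β)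

def seqDen (γ : K) (m : ℕ) : K := ∏ t ∈ range m, ((t : K) + γ)

theorem seqNum_succ (α β γ : K) (m : ℕ) :
    seqNum α β γ (m + 1) = seqNum α β γ m * (α * (m + γ) + β) :=
  prod_range_succ _ m

theorem seqDen_succ (γ : K) (m : ℕ) : seqDen γ (m + 1) = seqDen γ m * (m + γ) :=
  prod_range_succ _ m

theorem eq_seqNum_div_seqDen {a : ℕ → K} {α β γ : K} (ha0 : a 0 = 1)
    (hγ : ∀ m : ℕ, (m : K) + γ ≠ 0) (hrec : ∀ m : ℕ, a (m + 1) = (α + β / ((m : K) + γ)) * a m)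
    (m : ℕ) : a m = seqNum α β γ m / seqDen γ m := by
  induction m with
  | zero => simp [ha0, seqNum, seqDen]
  | succ m ih =>
    rw [hrec, ih, seqNum_succ, seqDen_succ, mul_div_mul_comm, mul_comm,
      show α + β / ((m : K) + γ) = (α * (m + γ) + β) / (m + γ) by field_simp [hγ m]]

theorem seqNum_div_seqDen_add {γ : K} (α β : K) (hγ : ∀ m : ℕ, (m : K) + γ ≠ 0) (m : ℕ) {j L : ℕ}
    (hj : j ≤ L) :
    seqNum α β γ (m + j) / seqDen γ (m + j) =
      seqNum α β γ m / seqDen γ (m + L) * ((∏ s ∈ range j, (α * (((m : K) + γ) + s) + β)) *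
        ∏ s ∈ range (L - j), (((m : K) + γ) + ((j + s : ℕ) : K))) := by
  have hnum : seqNum α β γ (m + j) =
      seqNum α β γ m * ∏ s ∈ range j, (α * (((m : K) + γ) + s) + β) := by
    rw [seqNum, prod_range_add]
    congr 1
    exact prod_congr rfl fun s _ => by push_cast; ring
  have hden : seqDen γ (m + L) =
      seqDen γ (m + j) * ∏ s ∈ range (L - j), (((m : K) + γ) + ((j + s : ℕ) : K)) := by
    rw [show m + L = m + j + (L - j) by omega, seqDen, prod_range_add]
    congr 1
    exact prod_congr rfl fun s _ => by push_cast; ring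
  have hne : ∏ s ∈ range (L - j), (((m : K) + γ) + ((j + s : ℕ) : K)) ≠ 0 :=
    prod_ne_zero_iff.mpr fun s _ => by simpa [add_assoc, add_comm, add_left_comm] using hγ (m + (j + s))
  have hD : seqDen γ (m + j) ≠ 0 := prod_ne_zero_iff.mpr fun t _ => hγ t
  rw [hnum, hden]
  field_simp

theorem prod_seqNum_div_seqDen_shift (α β γ : K) (n k : ℕ) :
    ∏ i ∈ range n, seqNum α β γ (i + k) / seqDen γ (i + k + (n - 1)) =
      (∏ i ∈ range n, seqNum α β γ i / seqDen γ (i + (n - 1))) *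
        ∏ j ∈ range k, ∏ i ∈ Icc 1 n, (α * ((i : K) + j + γ - 1) + β) / ((i : K) + j + γ + n - 2) := by
  induction k with
  | zero => simp
  | succ k ih =>
    rw [prod_range_succ, ← mul_assoc, ← ih, prod_Icc_one_eq_prod_range, ← prod_mul_distrib]
    refine prod_congr rfl fun i hi => ?_
    have hn : 1 ≤ n := by rw [mem_range] at hi; omega
    rw [show i + (k + 1) + (n - 1) = i + k + (n - 1) + 1 by omega, ← add_assoc, seqNum_succ,
      seqDen_succ, mul_div_mul_comm]
    push_cast [Nat.cast_sub hn]
    ring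

theorem det_hankel_eq_prod {a : ℕ → K} {α β γ : K} (ha0 : a 0 = 1) (hγ : ∀ m : ℕ, (m : K) + γ ≠ 0)
    (hrec : ∀ m : ℕ, a (m + 1) = (α + β / ((m : K) + γ)) * a m) (n k : ℕ) :
    (of fun i j : Fin n => a (i + j + k)).det =
      (∏ i ∈ range n, seqNum α β γ (i + k) / seqDen γ (i + k + (n - 1))) *
        ((∏ j ∈ range n, ∏ t ∈ range j, (β - α * t)) * ∏ j ∈ range n, ∏ i ∈ range j, ((i : K) - j)) := by
  set x : Fin n → K := fun i => (i : K) + ((k : K) + γ) with hx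
  set E : Matrix (Fin n) (Fin n) K := of fun i j => (∏ s ∈ range j, (α * (x i + s) + β)) *
    ∏ s ∈ range (n - 1 - j), (x i + ((j + s : ℕ) : K)) with hE
  have hentry : (of fun i j : Fin n => a (i + j + k)) =
      of fun i j : Fin n => seqNum α β γ (i + k) / seqDen γ (i + k + (n - 1)) * E i j := by
    ext i j
    have hxi : ((i + k : ℕ) : K) + γ = x i := by rw [hx]; push_cast; ring
    rw [of_apply, of_apply, eq_seqNum_div_seqDen ha0 hγ hrec, show (i : ℕ) + j + k = i + k + j by ring,
      seqNum_div_seqDen_add α β hγ _ (show (j : ℕ) ≤ n - 1 by omega), hxi, hE, of_apply]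
  rw [hentry, det_mul_column, hE, det_prod_affine_mul_prod_shift, hx, det_vandermonde_rev_add,
    Fin.prod_univ_eq_prod_range (fun i => seqNum α β γ (i + k) / seqDen γ (i + k + (n - 1)))]

theorem prod_range_natCast_sub_eq_prod_neg (n : ℕ) :
    ∏ i ∈ range n, ((i : K) - n) = ∏ i ∈ range n, -((i : K) + 1) := by
  rw [← prod_range_reflect]
  refine prod_congr rfl fun i hi => ?_
  rw [mem_range] at hi
  rw [Nat.cast_sub (by omega), Nat.cast_sub (by omega)]
  push_cast
  ring

theorem hankel_product_eq_closed_form (α β γ : K) (n : ℕ) :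
    (∏ i ∈ range n, seqNum α β γ i / seqDen γ (i + (n - 1))) *
        (∏ j ∈ range n, ∏ t ∈ range j, (β - α * t)) * ∏ j ∈ range n, ∏ i ∈ range j, ((i : K) - j) =
      ∏ j ∈ Icc 1 (n - 1), ∏ i ∈ Icc 1 j,
        ((i : K) * (α * ((i : K) + γ - 1) + β) * (α * ((i : K) - 1) - β)) /
          (((i : K) + γ - 1) * ((i : K) + j + γ - 2) * ((i : K) + j + γ - 1)) := by
  rw [prod_Icc_one_sub_one_eq_prod_range (by simp)]
  induction n with
  | zero => simp
  | succ n ih =>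
    have hshift : ∏ i ∈ range n, seqNum α β γ i / seqDen γ (i + n) =
        (∏ i ∈ range n, seqNum α β γ i / seqDen γ (i + (n - 1))) *
          ∏ i ∈ range n, (((i + (n - 1) : ℕ) : K) + γ)⁻¹ := by
      rw [← prod_mul_distrib]
      refine prod_congr rfl fun i hi => ?_
      rw [mem_range] at hi
      rw [show i + n = i + (n - 1) + 1 by omega, seqDen_succ, div_mul_eq_div_div, div_eq_mul_inv]
    have hden : seqDen γ (n + n) = seqDen γ n * ∏ i ∈ range n, (((n + i : ℕ) : K) + γ) :=
      prod_range_add _ n n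
    simp only [prod_range_succ _ n, Nat.add_sub_cancel]
    rw [← ih, hshift, hden, prod_range_natCast_sub_eq_prod_neg, seqNum, seqDen, prod_Icc_one_eq_prod_range]
    rw [show ∀ A B C D E F G : K, A * B * C * (D * E) * (F * G) = A * D * F * (B * C * E * G) by
      intros; ring]
    congr 1
    simp only [div_eq_mul_inv, ← prod_mul_distrib, ← prod_inv_distrib]
    refine prod_congr rfl fun i hi => ?_
    rw [mem_range] at hi
    push_cast [Nat.cast_sub (show 1 ≤ n by omega)]
    simp only [mul_inv]
    ring

end Hankel

theorem stmt3_general (a : ℕ → ℂ) (α β γ : ℂ) (n k : ℕ) (ha0 : a 0 = 1)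
    (hγ : ∀ m : ℕ, (m : ℂ) + γ ≠ 0)
    (hrec : ∀ m : ℕ, a (m + 1) = (α + β / ((m : ℂ) + γ)) * a m) :
    (Matrix.of fun i j : Fin n => a ((i : ℕ) + (j : ℕ) + k)).det =
      (∏ j ∈ Finset.Icc 1 (n - 1), ∏ i ∈ Finset.Icc 1 j,
          ((i : ℂ) * (α * ((i : ℂ) + γ - 1) + β) * (α * ((i : ℂ) - 1) - β)) /
            (((i : ℂ) + γ - 1) * ((i : ℂ) + j + γ - 2) * ((i : ℂ) + j + γ - 1))) *
        ∏ j ∈ Finset.range k, ∏ i ∈ Finset.Icc 1 n,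
          (α * ((i : ℂ) + j + γ - 1) + β) / ((i : ℂ) + j + γ + n - 2) := by
  rw [det_hankel_eq_prod ha0 hγ hrec, prod_seqNum_div_seqDen_shift, ← hankel_product_eq_closed_form]
  ring

theorem stmt3 (a : ℕ → ℂ) (α β γ : ℂ) (n k : ℕ) (ha0 : a 0 = 1)
    (hγ : ∀ m : ℕ, (m : ℂ) + γ ≠ 0)
    (hrec : ∀ m : ℕ, a (m + 1) = (α + β / ((m : ℂ) + γ)) * a m)
    (h1 : ∀ i j : ℕ, 1 ≤ i → i ≤ j → j ≤ n - 1 →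
      ((i : ℂ) + γ - 1 ≠ 0 ∧ (i : ℂ) + j + γ - 2 ≠ 0 ∧ (i : ℂ) + j + γ - 1 ≠ 0))
    (h2 : ∀ i j : ℕ, 1 ≤ i → i ≤ n → j < k → (i : ℂ) + j + γ + n - 2 ≠ 0) :
    (Matrix.of fun i j : Fin n => a ((i : ℕ) + (j : ℕ) + k)).det =
      (∏ j ∈ Finset.Icc 1 (n - 1), ∏ i ∈ Finset.Icc 1 j,
          ((i : ℂ) * (α * ((i : ℂ) + γ - 1) + β) * (α * ((i : ℂ) - 1) - β)) /
            (((i : ℂ) + γ - 1) * ((i : ℂ) + j + γ - 2) * ((i : ℂ) + j + γ - 1))) *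
        ∏ j ∈ Finset.range k, ∏ i ∈ Finset.Icc 1 n,
          (α * ((i : ℂ) + j + γ - 1) + β) / ((i : ℂ) + j + γ + n - 2) :=
  stmt3_general a α β γ n k ha0 hγ hrec
end

section
/- Let $a_n = \binom{2n}{n}$ and let $d_n^{(k)} = \det(a_{i+j+k-2})_{1 \le i,j \le n}$. Then $d_n^{(0)} = 2^{n-1}$, and for $k \ge 1$, $d_n^{(k)} = 2^n \prod_{1 \le i \le j \le k-1} \frac{i+j-1+2n}{i+j-1}$. -/
/-
Dodgson condensation (Desnanot–Jacobi) with the first and last rows and columns as border gives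
  `d(n+2,k) d(n,k+2) = d(n+1,k) d(n+1,k+2) - d(n+1,k+1)^2`,
by taking the Schur complement of the interior block, which is again a Hankel matrix. All
determinants involved are positive, so the recurrence determines `d(n,k)` from `n = 0, 1`, where
`a_k = 2 P(1,k)` for `k ≥ 1` (`P(n,k)` the double product). It remains to check that
`2^n P(n,k)` satisfies the same recurrence: `P(n,k+1)/P(n,k)` and `P(n+1,k)/P(n,k)` are products
of rational functions whose own successive ratios are explicit, and the recurrence collapses to a
polynomial identity.
-/

open Finset
open scoped Nat

def finSumOneEquiv (m : ℕ) : Fin m ⊕ Fin 1 ≃ Fin (m + 1) :=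
  (Equiv.sumComm _ _).trans (finSumFinEquiv.trans (finCongr (Nat.add_comm 1 m)))

-- `inl i ↦ i + 1`, `inr 0 ↦ 0`, `inr 1 ↦ m + 1`: interior indices, then the two border ones.
def finSumTwoEquiv (m : ℕ) : Fin m ⊕ Fin 2 ≃ Fin (m + 2) :=
  (Equiv.sumCongr (Equiv.refl _) (finSumFinEquiv (m := 1) (n := 1)).symm).trans
    ((Equiv.sumAssoc _ _ _).symm.trans
      ((Equiv.sumCongr (finSumOneEquiv m) (Equiv.refl _)).trans finSumFinEquiv))

-- `r = 0`: `inl i ↦ i + 1`, `inr 0 ↦ 0`;  `r = 1`: `inl i ↦ i`, `inr 0 ↦ m`.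
def borderEquiv (m : ℕ) (r : Fin 2) : Fin m ⊕ Fin 1 ≃ Fin (m + 1) :=
  ![finSumOneEquiv m, finSumFinEquiv] r

namespace Matrix

section Condensation

def borderEmb {ι : Type*} (r : Fin 2) : ι ⊕ Fin 1 → ι ⊕ Fin 2 := Sum.map id fun _ => r

variable {ι R : Type*} [Fintype ι] [DecidableEq ι] [CommRing R]

lemma det_submatrix_borderEmb (M : Matrix (ι ⊕ Fin 2) (ι ⊕ Fin 2) R)
    [Invertible M.toBlocks₁₁] (r s : Fin 2) :
    (M.submatrix (borderEmb r) (borderEmb s)).det =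
      M.toBlocks₁₁.det * (M.toBlocks₂₂ - M.toBlocks₂₁ * ⅟M.toBlocks₁₁ * M.toBlocks₁₂) r s := by
  have hblocks : M.submatrix (borderEmb r) (borderEmb s) =
      fromBlocks M.toBlocks₁₁ (of fun i _ => M.toBlocks₁₂ i s) (of fun _ j => M.toBlocks₂₁ r j)
        (of fun _ _ => M.toBlocks₂₂ r s) := by
    ext (i | _) (j | _) <;> rfl
  rw [hblocks, det_fromBlocks₁₁, det_fin_one]
  simp [Matrix.mul_apply]

theorem det_mul_det_toBlocks₁₁ (M : Matrix (ι ⊕ Fin 2) (ι ⊕ Fin 2) R)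
    (h : IsUnit M.toBlocks₁₁.det) :
    M.det * M.toBlocks₁₁.det =
      (M.submatrix (borderEmb 0) (borderEmb 0)).det *
          (M.submatrix (borderEmb 1) (borderEmb 1)).det -
        (M.submatrix (borderEmb 0) (borderEmb 1)).det *
          (M.submatrix (borderEmb 1) (borderEmb 0)).det := by
  have := M.toBlocks₁₁.invertibleOfIsUnitDet h
  have hM : M.det = M.toBlocks₁₁.det *
      (M.toBlocks₂₂ - M.toBlocks₂₁ * ⅟M.toBlocks₁₁ * M.toBlocks₁₂).det := by
    conv_lhs => rw [← fromBlocks_toBlocks M]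
    exact det_fromBlocks₁₁ ..
  simp only [hM, det_fin_two, det_submatrix_borderEmb]
  ring

theorem det_submatrix_mul_det_submatrix_swap {m n R : Type*} [Fintype m] [DecidableEq m]
    [Fintype n] [DecidableEq n] [CommRing R] (e f : n ≃ m) (A : Matrix m m R) :
    (A.submatrix e f).det * (A.submatrix f e).det = A.det ^ 2 := by
  have hef : e = f.trans (f.symm.trans e) := by ext; simp
  set σ := f.symm.trans e
  rw [hef]
  change ((A.submatrix σ id).submatrix f f).det * ((A.submatrix id σ).submatrix f f).det = _
  rw [det_submatrix_equiv_self, det_submatrix_equiv_self, det_permute, det_permute',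
    mul_mul_mul_comm, ← Int.cast_mul, ← Units.val_mul, Int.units_mul_self]
  simp [sq]

end Condensation

section Hankel

variable {K : Type*}

def hankel (a : ℕ → K) (k n : ℕ) : Matrix (Fin n) (Fin n) K :=
  of fun i j => a (i + j + k)

lemma val_finSumTwoEquiv_borderEmb (m : ℕ) (r : Fin 2) (x : Fin m ⊕ Fin 1) :
    (finSumTwoEquiv m (borderEmb r x) : ℕ) = borderEquiv m r x + r := by
  have h0 : (finSumFinEquiv (m := 1) (n := 1)).symm 0 = Sum.inl 0 := rfl
  have h1 : (finSumFinEquiv (m := 1) (n := 1)).symm 1 = Sum.inr 0 := rfl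
  fin_cases r <;> rcases x with i | ⟨_ | _, _⟩ <;>
    simp [finSumTwoEquiv, finSumOneEquiv, borderEquiv, borderEmb, h0, h1] <;> omega

lemma hankel_submatrix_borderEmb (a : ℕ → K) (k m : ℕ) (r s : Fin 2) :
    ((hankel a k (m + 2)).submatrix (finSumTwoEquiv m) (finSumTwoEquiv m)).submatrix
        (borderEmb r) (borderEmb s) =
      (hankel a (k + r + s) (m + 1)).submatrix (borderEquiv m r) (borderEquiv m s) := by
  ext x y
  simp only [hankel, submatrix_apply, of_apply, val_finSumTwoEquiv_borderEmb]
  congr 1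
  ring

lemma toBlocks₁₁_hankel_submatrix (a : ℕ → K) (k m : ℕ) :
    ((hankel a k (m + 2)).submatrix (finSumTwoEquiv m) (finSumTwoEquiv m)).toBlocks₁₁ =
      hankel a (k + 2) m := by
  ext i j
  simp only [hankel, toBlocks₁₁, submatrix_apply, of_apply]
  congr 1
  simp [finSumTwoEquiv, finSumOneEquiv]
  omega

theorem det_hankel_condensation [CommRing K] (a : ℕ → K) (k m : ℕ)
    (h : IsUnit (hankel a (k + 2) m).det) :
    (hankel a k (m + 2)).det * (hankel a (k + 2) m).det =
      (hankel a k (m + 1)).det * (hankel a (k + 2) (m + 1)).det -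
        (hankel a (k + 1) (m + 1)).det ^ 2 := by
  have := det_mul_det_toBlocks₁₁
    ((hankel a k (m + 2)).submatrix (finSumTwoEquiv m) (finSumTwoEquiv m))
  simp only [toBlocks₁₁_hankel_submatrix, hankel_submatrix_borderEmb, det_submatrix_equiv_self,
    Fin.val_zero, Fin.val_one, add_zero, add_assoc, one_add_one_eq_two] at this
  rw [this h, det_submatrix_mul_det_submatrix_swap]

end Hankel

end Matrix

namespace HankelCentralBinom

def rowProd (n j : ℕ) : ℚ :=
  ∏ i ∈ Icc 1 j, ((i : ℚ) + j - 1 + 2 * n) / ((i : ℚ) + j - 1)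

def doubleProd (n k : ℕ) : ℚ :=
  ∏ j ∈ Icc 1 (k - 1), rowProd n j

lemma doubleProd_succ (n k : ℕ) : doubleProd n (k + 1) = doubleProd n k * rowProd n k := by
  rcases k with _ | k
  · simp [doubleProd, rowProd]
  · rw [doubleProd, doubleProd, Nat.add_sub_cancel, prod_Icc_succ_top (by omega)]
    rfl

lemma rowProd_pos (n j : ℕ) : 0 < rowProd n j := by
  refine prod_pos fun i hi => ?_
  have : (1 : ℚ) ≤ i := by exact_mod_cast (mem_Icc.1 hi).1
  have : (1 : ℚ) ≤ j := by exact_mod_cast (mem_Icc.1 hi).1.trans (mem_Icc.1 hi).2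
  have : (0 : ℚ) ≤ n := n.cast_nonneg
  exact div_pos (by linarith) (by linarith)

lemma doubleProd_pos (n k : ℕ) : 0 < doubleProd n k :=
  prod_pos fun j _ => rowProd_pos n j

lemma prod_Icc_one_cast_add (c k : ℕ) : ∏ i ∈ Icc 1 k, ((i : ℚ) + c) = (c + k)! / c ! := by
  induction k with
  | zero => simp [(Nat.factorial_pos c).ne']
  | succ k ih =>
    rw [prod_Icc_succ_top (by omega), ih, ← add_assoc, Nat.factorial_succ]
    push_cast
    ring

lemma rowProd_succ (n k : ℕ) :
    rowProd n (k + 1) = (2 * n + 2 * k + 1)! * k ! / ((2 * n + k)! * (2 * k + 1)!) := by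
  have hnum : ∏ i ∈ Icc 1 (k + 1), ((i : ℚ) + ↑(k + 1) - 1 + 2 * n) =
      (2 * n + 2 * k + 1)! / (2 * n + k)! := by
    rw [show 2 * n + 2 * k + 1 = 2 * n + k + (k + 1) by ring, ← prod_Icc_one_cast_add]
    refine prod_congr rfl fun i _ => ?_
    push_cast
    ring
  have hden : ∏ i ∈ Icc 1 (k + 1), ((i : ℚ) + ↑(k + 1) - 1) = (2 * k + 1)! / k ! := by
    rw [show 2 * k + 1 = k + (k + 1) by ring, ← prod_Icc_one_cast_add]
    refine prod_congr rfl fun i _ => ?_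
    push_cast
    ring
  rw [rowProd, prod_div_distrib, hnum, hden]
  field_simp

lemma rowProd_succ_succ (n k : ℕ) :
    rowProd n (k + 2) = rowProd n (k + 1) *
      ((2 * n + 2 * k + 3) * (n + k + 1) / ((2 * n + k + 1) * (2 * k + 3))) := by
  rw [rowProd_succ, rowProd_succ]
  simp only [show 2 * n + 2 * (k + 1) + 1 = 2 * n + 2 * k + 1 + 1 + 1 by ring,
    show 2 * n + (k + 1) = 2 * n + k + 1 by ring, show 2 * (k + 1) + 1 = 2 * k + 1 + 1 + 1 by ring,
    Nat.factorial_succ]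
  push_cast
  field_simp
  ring

def shiftRatio (n j : ℕ) : ℚ :=
  (2 * n + 2 * j + 1) * (2 * n + 2 * j) / ((2 * n + j + 1) * (2 * n + j))

def shiftProd (n k : ℕ) : ℚ :=
  ∏ j ∈ Icc 1 (k - 1), shiftRatio n j

lemma rowProd_succ_left (n k : ℕ) :
    rowProd (n + 1) (k + 1) = rowProd n (k + 1) * shiftRatio n (k + 1) := by
  rw [rowProd_succ, rowProd_succ, shiftRatio]
  simp only [show 2 * (n + 1) + 2 * k + 1 = 2 * n + 2 * k + 1 + 1 + 1 by ring,
    show 2 * (n + 1) + k = 2 * n + k + 1 + 1 by ring, Nat.factorial_succ]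
  push_cast
  field_simp
  ring

lemma doubleProd_succ_left (n k : ℕ) :
    doubleProd (n + 1) k = doubleProd n k * shiftProd n k := by
  rw [doubleProd, doubleProd, shiftProd, ← prod_mul_distrib]
  refine prod_congr rfl fun j hj => ?_
  obtain ⟨j, rfl⟩ : ∃ j', j = j' + 1 := ⟨j - 1, by grind⟩
  exact rowProd_succ_left n j

lemma shiftProd_succ (n k : ℕ) :
    shiftProd n (k + 2) = shiftProd n (k + 1) * shiftRatio n (k + 1) := by
  rw [shiftProd, shiftProd, show k + 2 - 1 = k + 1 by omega, Nat.add_sub_cancel,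
    prod_Icc_succ_top (by omega)]

lemma shiftProd_succ_left (n k : ℕ) :
    shiftProd (n + 1) (k + 1) = shiftProd n (k + 1) *
      ((2 * n + 2 * k + 3) * (2 * n + 2 * k + 2) * (2 * n + 2) * (2 * n + 1) /
        ((2 * n + k + 3) * (2 * n + k + 2) ^ 2 * (2 * n + k + 1))) := by
  induction k with
  | zero =>
    simp only [shiftProd, Nat.add_sub_cancel, Icc_eq_empty_of_lt zero_lt_one, prod_empty]
    push_cast
    field_simp
    ring
  | succ k ih =>
    rw [shiftProd_succ, shiftProd_succ, ih, shiftRatio, shiftRatio]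
    push_cast
    field_simp
    ring

theorem doubleProd_condensation (n k : ℕ) (hk : 1 ≤ k) :
    doubleProd (n + 2) k * doubleProd n (k + 2) =
      doubleProd (n + 1) k * doubleProd (n + 1) (k + 2) - doubleProd (n + 1) (k + 1) ^ 2 := by
  obtain ⟨k, rfl⟩ : ∃ k', k = k' + 1 := ⟨k - 1, by omega⟩
  -- Reduce every term to `doubleProd n (k + 1)`, `shiftProd n (k + 1)` and `rowProd n (k + 1)`.
  have h₁ := doubleProd_succ_left n (k + 1)
  have h₂ : doubleProd (n + 2) (k + 1) = doubleProd (n + 1) (k + 1) * shiftProd (n + 1) (k + 1) :=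
    doubleProd_succ_left (n + 1) (k + 1)
  have h₃ : doubleProd n (k + 1 + 2) =
      doubleProd n (k + 1) * rowProd n (k + 1) * rowProd n (k + 2) := by
    rw [← doubleProd_succ, ← doubleProd_succ]
  have h₄ : doubleProd (n + 1) (k + 1 + 2) =
      doubleProd (n + 1) (k + 1) * rowProd (n + 1) (k + 1) * rowProd (n + 1) (k + 2) := by
    rw [← doubleProd_succ, ← doubleProd_succ]
  have h₅ := doubleProd_succ (n + 1) (k + 1)
  rw [h₂, h₃, h₄, h₅, h₁, shiftProd_succ_left, rowProd_succ_succ, rowProd_succ_left,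
    rowProd_succ_left, rowProd_succ_succ, shiftRatio, shiftRatio]
  push_cast
  field_simp
  ring

lemma rowProd_zero_left (j : ℕ) : rowProd 0 j = 1 := by
  refine prod_eq_one fun i hi => ?_
  have : (1 : ℚ) ≤ i := by exact_mod_cast (mem_Icc.1 hi).1
  have : (1 : ℚ) ≤ j := by exact_mod_cast (mem_Icc.1 hi).1.trans (mem_Icc.1 hi).2
  rw [Nat.cast_zero, mul_zero, add_zero, div_self (by linarith)]

lemma doubleProd_zero_left (k : ℕ) : doubleProd 0 k = 1 :=
  prod_eq_one fun j _ => rowProd_zero_left j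

lemma doubleProd_one (n : ℕ) : doubleProd n 1 = 1 := by
  simp [doubleProd]

lemma doubleProd_two (n : ℕ) : doubleProd n 2 = 2 * n + 1 := by
  simp [doubleProd, rowProd, add_comm]

lemma centralBinom_eq_two_mul_doubleProd (k : ℕ) (hk : 1 ≤ k) :
    (k.centralBinom : ℚ) = 2 * doubleProd 1 k := by
  induction k, hk using Nat.le_induction with
  | base => simp [Nat.centralBinom, doubleProd_one]
  | succ k _ ih =>
    obtain ⟨k, rfl⟩ : ∃ k', k = k' + 1 := ⟨k - 1, by omega⟩
    have hstep : ((k + 2 : ℕ) : ℚ) * (k + 1 + 1).centralBinom =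
        2 * (2 * (k + 1) + 1) * (k + 1).centralBinom := by
      exact_mod_cast Nat.succ_mul_centralBinom_succ (k + 1)
    have hrow : rowProd 1 (k + 1) = shiftRatio 0 (k + 1) := by
      simpa [rowProd_zero_left] using rowProd_succ_left 0 k
    rw [doubleProd_succ, hrow, ← mul_assoc, ← ih, shiftRatio]
    push_cast at hstep ⊢
    field_simp
    linear_combination ((k : ℚ) + 1) * hstep

open Matrix

abbrev centralBinomSeq (m : ℕ) : ℚ := m.centralBinom

theorem det_hankel_centralBinom (n k : ℕ) (hk : 1 ≤ k) :
    (hankel centralBinomSeq k n).det = 2 ^ n * doubleProd n k := by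
  induction n using Nat.twoStepInduction generalizing k with
  | zero => simp [doubleProd_zero_left]
  | one => simp [hankel, centralBinom_eq_two_mul_doubleProd k hk]
  | more m ih₀ ih₁ =>
    have hpos : 0 < (2 : ℚ) ^ m * doubleProd m (k + 2) := by
      have := doubleProd_pos m (k + 2)
      positivity
    have hcond := det_hankel_condensation centralBinomSeq k m
    rw [ih₀ (k + 2) (by omega), ih₁ k hk, ih₁ (k + 1) (by omega), ih₁ (k + 2) (by omega)] at hcond
    refine mul_right_cancel₀ hpos.ne' ((hcond hpos.ne'.isUnit).trans ?_)
    linear_combination (-(2 : ℚ) ^ (2 * m + 2)) * doubleProd_condensation m k hk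

theorem det_hankel_centralBinom_zero (n : ℕ) :
    (hankel centralBinomSeq 0 n).det = 2 ^ (n - 1) := by
  induction n using Nat.twoStepInduction with
  | zero => simp
  | one => simp [hankel]
  | more m _ ih₁ =>
    have hpos : 0 < (2 : ℚ) ^ m * (2 * m + 1) := by positivity
    have hcond := det_hankel_condensation centralBinomSeq 0 m
    rw [det_hankel_centralBinom m 2 (by omega), doubleProd_two, ih₁, Nat.add_sub_cancel,
      det_hankel_centralBinom (m + 1) 1 le_rfl, det_hankel_centralBinom (m + 1) 2 (by omega),
      doubleProd_one, doubleProd_two] at hcond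
    refine mul_right_cancel₀ hpos.ne' ((hcond hpos.ne'.isUnit).trans ?_)
    rw [show m + 2 - 1 = m + 1 by omega]
    push_cast
    ring

end HankelCentralBinom

theorem stmt13 (n : ℕ) :
    (Matrix.of fun i j : Fin n =>
        ((2 * ((i : ℕ) + (j : ℕ))).choose ((i : ℕ) + (j : ℕ)) : ℚ)).det = 2 ^ (n - 1) ∧
    ∀ k : ℕ, 1 ≤ k →
      (Matrix.of fun i j : Fin n =>
          ((2 * ((i : ℕ) + (j : ℕ) + k)).choose ((i : ℕ) + (j : ℕ) + k) : ℚ)).det =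
        2 ^ n * ∏ j ∈ Finset.Icc 1 (k - 1), ∏ i ∈ Finset.Icc 1 j,
          ((i : ℚ) + j - 1 + 2 * n) / ((i : ℚ) + j - 1) :=
  ⟨HankelCentralBinom.det_hankel_centralBinom_zero n,
    HankelCentralBinom.det_hankel_centralBinom n⟩
end
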